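/- arXiv:1008.1661 — 6 statements merged into one kernel-verified Lean document; each statement's English description precedes it below -/
import Mathlib

section
/- Suffix-free NFAs are non-returning: let M be an NFA with single start state s accepting a language L, and assume every state of M is useful, i.e., appears on some accepting path. If L is suffix-free, then no transition of M enters s (that is, s ∉ δ(q,a) for every state q and every letter a). -/
open Computability

/-- A nondeterministic finite automaton with a single start state and
no ε-transitions. -/
structure SNFA (α : Type) (σ : Type) where
  step : σ → α → Set σ
  start : σ
  accept : Set σ

namespace SNFA

variable {α σ : Type}

/-- The set of states reachable from some state in `S` by one transition on `a`. -/
def stepSet (M : SNFA α σ) (S : Set σ) (a : α) : Set σ :=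
  ⋃ s ∈ S, M.step s a

/-- The set of states reachable from the set `S` of states by reading the word `w`. -/
def evalFrom (M : SNFA α σ) (S : Set σ) (w : List α) : Set σ :=
  w.foldl M.stepSet S

/-- The language accepted by `M`: all words spelled out by a path
from the start state to an accepting state. -/
def accepts (M : SNFA α σ) : Language α :=
  {w | ∃ q ∈ M.accept, q ∈ M.evalFrom {M.start} w}

end SNFA

/-- A language is suffix-free if no word of the language is a proper suffix
of another word of the language. -/
def SuffixFree {α : Type} (L : Language α) : Prop :=
  ∀ u v : List α, u ∈ L → v ∈ L → u <:+ v → u = v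

/-- `NSCle L k`: there is an NFA with at most `k` states accepting `L`
(so the nondeterministic state complexity of `L` is at most `k`). -/
def NSCle {α : Type} (L : Language α) (k : ℕ) : Prop :=
  ∃ (σ : Type) (x : Fintype σ) (M : SNFA α σ), M.accepts = L ∧ @Fintype.card σ x ≤ k

/-- `NSCge L k`: every NFA accepting `L` has at least `k` states
(so the nondeterministic state complexity of `L` is at least `k`). -/
def NSCge {α : Type} (L : Language α) (k : ℕ) : Prop :=
  ∀ (σ : Type) [Fintype σ] (M : SNFA α σ), M.accepts = L → k ≤ Fintype.card σ

/-- `NSCeq L m`: the nondeterministic state complexity of `L` is exactly `m`: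
some NFA with `m` states accepts `L` and every NFA accepting `L` has at least
`m` states. -/
def NSCeq {α : Type} (L : Language α) (m : ℕ) : Prop :=
  NSCle L m ∧ NSCge L m

/-
If a transition `q --a--> s` entered the start state `s`, then, `q` being reachable by some word
`u`, the word `u a` leads from `s` back to `s`. Prepending `u a` to any accepted word (one exists,
since `s` is useful) gives an accepted word of which the original one is a proper suffix.
-/

namespace SNFA

variable {α σ : Type} (M : SNFA α σ)

theorem evalFrom_append (S : Set σ) (u v : List α) :
    M.evalFrom S (u ++ v) = M.evalFrom (M.evalFrom S u) v :=
  List.foldl_append ..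

theorem evalFrom_mono {S T : Set σ} (h : S ⊆ T) (w : List α) :
    M.evalFrom S w ⊆ M.evalFrom T w := by
  induction w generalizing S T with
  | nil => exact h
  | cons a w ih =>
    refine ih fun p hp => ?_
    simp only [stepSet, Set.mem_iUnion] at hp ⊢
    obtain ⟨q, hq, hp⟩ := hp
    exact ⟨q, h hq, hp⟩

theorem mem_evalFrom_append_singleton {S : Set σ} {u : List α} {q p : σ} {a : α}
    (hq : q ∈ M.evalFrom S u) (hp : p ∈ M.step q a) : p ∈ M.evalFrom S (u ++ [a]) := by
  rw [evalFrom_append]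
  simp only [evalFrom, List.foldl_cons, List.foldl_nil, stepSet, Set.mem_iUnion]
  exact ⟨q, hq, hp⟩

theorem append_mem_accepts_of_start_mem_evalFrom {x w : List α}
    (hx : M.start ∈ M.evalFrom {M.start} x) (hw : w ∈ M.accepts) : x ++ w ∈ M.accepts := by
  obtain ⟨f, hf, hfw⟩ := hw
  refine ⟨f, hf, ?_⟩
  rw [evalFrom_append]
  exact M.evalFrom_mono (Set.singleton_subset_iff.mpr hx) w hfw

end SNFA

theorem SuffixFree.eq_nil_of_append_mem {α : Type} {L : Language α} (hL : SuffixFree L)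
    {x w : List α} (hw : w ∈ L) (hxw : x ++ w ∈ L) : x = [] := by
  have hlen := congrArg List.length (hL w (x ++ w) hw hxw (List.suffix_append x w))
  simp only [List.length_append] at hlen
  exact List.eq_nil_of_length_eq_zero (by omega)

theorem suffixFree_nonreturning_general {α σ : Type} (M : SNFA α σ)
    (huseful : ∀ q : σ, ∃ u w : List α,
      q ∈ M.evalFrom {M.start} u ∧ ∃ f ∈ M.accept, f ∈ M.evalFrom {q} w)
    (hsf : SuffixFree M.accepts) :
    ∀ (q : σ) (a : α), M.start ∉ M.step q a := by
  intro q a hstep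
  obtain ⟨u, -, hqu, -⟩ := huseful q
  obtain ⟨-, w, -, f, hf, hfw⟩ := huseful M.start
  have hw : w ∈ M.accepts := ⟨f, hf, hfw⟩
  have hloop : M.start ∈ M.evalFrom {M.start} (u ++ [a]) :=
    M.mem_evalFrom_append_singleton hqu hstep
  have hnil : u ++ [a] = [] :=
    hsf.eq_nil_of_append_mem hw (M.append_mem_accepts_of_start_mem_evalFrom hloop hw)
  simp at hnil

/-- **Suffix-free NFAs are non-returning.** If every state of the NFA `M` is
useful (lies on some accepting path) and the language accepted by `M` is
suffix-free, then no transition of `M` enters the start state. -/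
theorem suffixFree_nonreturning {α σ : Type} [Fintype σ] (M : SNFA α σ)
    (huseful : ∀ q : σ, ∃ u w : List α,
      q ∈ M.evalFrom {M.start} u ∧ ∃ f ∈ M.accept, f ∈ M.evalFrom {q} w)
    (hsf : SuffixFree M.accepts) :
    ∀ (q : σ) (a : α), M.start ∉ M.step q a :=
  suffixFree_nonreturning_general M huseful hsf
end

section
/- Let n ≥ 3 and let L₂ = { b a^{k(n-2)} b : k ≥ 0 } over the alphabet {a,b} (i.e., the language of the regular expression b(a^{n-2})*b). Then L₂ is suffix-free and NSC(L₂) = n, i.e., there is an NFA with n states accepting L₂ and every NFA accepting L₂ has at least n states. -/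
open Computability

/-! With `m = n - 2`: every word of `b (a^m)* b` starts with `b` and contains exactly two `b`s,
so a proper suffix of a word `b a^(km) b` is a suffix of its tail `a^(km) b`, which has only
one `b`.
The upper bound is the NFA with an initial state, a cycle `ZMod m` counting `a`s modulo `m`,
and a final state. For the lower bound, the `m + 2` pairs `(b a^i, a^(m-i) b)` for `i < m`,
`(ε, bb)` and `(bb, ε)` form a fooling set: if `xᵢ yⱼ` is in the language then `xᵢ` and `xⱼ`
contain the same number of `b`s, and in the block `i, j < m` the exponent `i + (m - j)` must
be divisible by `m`. Distinct pairs then reach distinct states after their prefixes. -/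

namespace SNFA

variable {α σ : Type}

def toNFA (M : SNFA α σ) : NFA α σ := ⟨M.step, {M.start}, M.accept⟩

theorem toNFA_accepts (M : SNFA α σ) : M.toNFA.accepts = M.accepts := rfl

end SNFA

namespace NFA

variable {α σ : Type*} (M : NFA α σ)

theorem append_mem_accepts_iff {x y : List α} :
    x ++ y ∈ M.accepts ↔ ∃ p ∈ M.eval x, y ∈ M.acceptsFrom {p} := by
  rw [accepts_eq_acceptsFrom_start, append_mem_acceptsFrom]
  constructor
  · rintro ⟨s, hs, h⟩
    obtain ⟨p, hp, h⟩ := mem_evalFrom_iff_exists.mp h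
    exact ⟨p, hp, s, hs, h⟩
  · rintro ⟨p, hp, s, hs, h⟩
    exact ⟨s, hs, mem_evalFrom_iff_exists.mpr ⟨p, hp, h⟩⟩

theorem notMem_acceptsFrom_empty (w : List α) : w ∉ M.acceptsFrom ∅ := by
  induction w with
  | nil => simp
  | cons a w ih => simpa [stepSet_empty] using ih

end NFA

def IsFoolingSet {α ι : Type} (L : Language α) (x y : ι → List α) : Prop :=
  (∀ i, x i ++ y i ∈ L) ∧ ∀ i j, x i ++ y j ∈ L → x j ++ y i ∈ L → i = j

theorem IsFoolingSet.nscge {α ι : Type} [Fintype ι] {L : Language α} {x y : ι → List α}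
    (h : IsFoolingSet L x y) : NSCge L (Fintype.card ι) := by
  intro σ _ M hM
  rw [← M.toNFA_accepts] at hM
  subst hM
  choose p hp hy using fun i => M.toNFA.append_mem_accepts_iff.mp (h.1 i)
  refine Fintype.card_le_of_injective p fun i j hij => h.2 i j ?_ ?_
  · exact M.toNFA.append_mem_accepts_iff.mpr ⟨p i, hp i, hij ▸ hy j⟩
  · exact M.toNFA.append_mem_accepts_iff.mpr ⟨p j, hp j, hij ▸ hy i⟩

theorem suffixFree_of_head?_of_count {α : Type} [DecidableEq α] {L : Language α} (b : α)
    (c : ℕ) (hhead : ∀ w ∈ L, w.head? = some b) (hcount : ∀ w ∈ L, w.count b = c) :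
    SuffixFree L := by
  intro u v hu hv huv
  obtain ⟨v, rfl⟩ : ∃ v', v = b :: v' := List.head?_eq_some_iff.mp (hhead _ hv)
  refine (List.suffix_cons_iff.mp huv).resolve_right fun hsuf => ?_
  have hle := hsuf.count_le b
  have hu := hcount u hu
  have hv := hcount _ hv
  rw [List.count_cons_self] at hv
  omega

theorem Nat.eq_of_dvd_add_sub {m i j : ℕ} (hi : i < m) (hj : j < m) (h : m ∣ i + (m - j)) :
    i = j := by
  have hle : m ≤ i + (m - j) := Nat.le_of_dvd (by omega) h
  have hsub : i + (m - j) - m = 0 := Nat.eq_zero_of_dvd_of_lt (Nat.dvd_sub h dvd_rfl) (by omega)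
  omega

def babLang (m : ℕ) : Language (Fin 2) :=
  {w | ∃ k : ℕ, w = 1 :: (List.replicate (k * m) 0 ++ [1])}

section babLang

variable {m : ℕ}

theorem cons_mem_babLang_iff {j : ℕ} :
    1 :: (List.replicate j 0 ++ [1]) ∈ babLang m ↔ m ∣ j := by
  constructor
  · rintro ⟨k, hk⟩
    have hlen := congrArg List.length hk
    simp only [List.length_cons, List.length_append, List.length_replicate] at hlen
    exact ⟨k, by rw [Nat.mul_comm]; omega⟩
  · rintro ⟨k, rfl⟩
    exact ⟨k, by rw [Nat.mul_comm]⟩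

theorem head?_of_mem_babLang {w : List (Fin 2)} (h : w ∈ babLang m) : w.head? = some 1 := by
  obtain ⟨k, rfl⟩ := h
  rfl

theorem count_one_of_mem_babLang {w : List (Fin 2)} (h : w ∈ babLang m) : w.count 1 = 2 := by
  obtain ⟨k, rfl⟩ := h
  simp [List.count_append, List.count_replicate]

theorem suffixFree_babLang (m : ℕ) : SuffixFree (babLang m) :=
  suffixFree_of_head?_of_count 1 2 (fun _ => head?_of_mem_babLang)
    fun _ => count_one_of_mem_babLang

end babLang
def babNFA (m : ℕ) : SNFA (Fin 2) (Unit ⊕ ZMod m ⊕ Unit) where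
  step q a :=
    match q with
    | .inl _ => if a = 1 then {.inr (.inl 0)} else ∅
    | .inr (.inl i) =>
        if a = 0 then {.inr (.inl (i + 1))}
        else if i = 0 then {.inr (.inr ())} else ∅
    | .inr (.inr _) => ∅
  start := .inl ()
  accept := {.inr (.inr ())}

theorem mem_babNFA_acceptsFrom_final {m : ℕ} (w : List (Fin 2)) :
    w ∈ (babNFA m).toNFA.acceptsFrom {.inr (.inr ())} ↔ w = [] := by
  cases w with
  | nil => simp [SNFA.toNFA, babNFA]
  | cons a w =>
    simpa [SNFA.toNFA, babNFA, NFA.stepSet_singleton] using NFA.notMem_acceptsFrom_empty _ w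

theorem mem_babNFA_acceptsFrom_cycle {m : ℕ} (i : ZMod m) (w : List (Fin 2)) :
    w ∈ (babNFA m).toNFA.acceptsFrom {.inr (.inl i)} ↔
      ∃ j : ℕ, w = List.replicate j 0 ++ [1] ∧ i + j = 0 := by
  induction w generalizing i with
  | nil => simp [SNFA.toNFA, babNFA]
  | cons a w ih =>
    rw [NFA.cons_mem_acceptsFrom, NFA.stepSet_singleton]
    match a with
    | 0 =>
      rw [show (babNFA m).toNFA.step (.inr (.inl i)) 0 = {.inr (.inl (i + 1))} from rfl, ih]
      constructor
      · rintro ⟨j, rfl, hj⟩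
        exact ⟨j + 1, rfl, by push_cast; rw [← hj]; ring⟩
      · rintro ⟨_ | j, hw, hj⟩
        · simp at hw
        · exact ⟨j, (List.cons.inj hw).2, by push_cast at hj; rw [← hj]; ring⟩
    | 1 =>
      have hw : ∀ j : ℕ, 1 :: w = List.replicate j 0 ++ [1] ↔ j = 0 ∧ w = [] := by
        rintro (_ | j) <;> simp [List.replicate_succ]
      simp only [hw]
      by_cases hi : i = 0
      · rw [show (babNFA m).toNFA.step (.inr (.inl i)) 1 = {.inr (.inr ())} by
          simp [SNFA.toNFA, babNFA, hi], mem_babNFA_acceptsFrom_final]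
        simp [hi]
      · rw [show (babNFA m).toNFA.step (.inr (.inl i)) 1 = ∅ by simp [SNFA.toNFA, babNFA, hi]]
        simpa [hi] using NFA.notMem_acceptsFrom_empty _ w

theorem babNFA_accepts (m : ℕ) : (babNFA m).accepts = babLang m := by
  ext w
  rw [← SNFA.toNFA_accepts, NFA.accepts_eq_acceptsFrom_start]
  have hhead : w ∈ babLang m → w.head? = some 1 := head?_of_mem_babLang
  rcases w with _ | ⟨a, w⟩
  · simpa [SNFA.toNFA, babNFA] using hhead
  · match a with
    | 0 =>
      rw [NFA.cons_mem_acceptsFrom,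
        show (babNFA m).toNFA.stepSet (babNFA m).toNFA.start 0 = ∅ by simp [SNFA.toNFA, babNFA]]
      exact iff_of_false (NFA.notMem_acceptsFrom_empty _ w) (by simpa using hhead)
    | 1 =>
      rw [NFA.cons_mem_acceptsFrom, show (babNFA m).toNFA.stepSet (babNFA m).toNFA.start 1 =
          {.inr (.inl 0)} by simp [SNFA.toNFA, babNFA], mem_babNFA_acceptsFrom_cycle]
      constructor
      · rintro ⟨j, rfl, hj⟩
        rw [zero_add, ZMod.natCast_eq_zero_iff] at hj
        exact cons_mem_babLang_iff.mpr hj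
      · rintro ⟨k, hk⟩
        exact ⟨k * m, (List.cons.inj hk).2, by simp⟩

def babPrefix (m : ℕ) : Fin m ⊕ Bool → List (Fin 2)
  | .inl i => 1 :: List.replicate i 0
  | .inr false => []
  | .inr true => [1, 1]

def babSuffix (m : ℕ) : Fin m ⊕ Bool → List (Fin 2)
  | .inl i => List.replicate (m - i) 0 ++ [1]
  | .inr false => [1, 1]
  | .inr true => []

theorem babPrefix_inl_append_babSuffix_inl {m : ℕ} (i j : Fin m) :
    babPrefix m (.inl i) ++ babSuffix m (.inl j) =
      1 :: (List.replicate (i + (m - j)) 0 ++ [1]) := by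
  simp [babPrefix, babSuffix, ← List.replicate_append_replicate]

theorem isFoolingSet_bab (m : ℕ) : IsFoolingSet (babLang m) (babPrefix m) (babSuffix m) := by
  have hmem : ∀ i, babPrefix m i ++ babSuffix m i ∈ babLang m := by
    rintro (i | _ | _)
    · rw [babPrefix_inl_append_babSuffix_inl, cons_mem_babLang_iff, Nat.add_sub_cancel' i.is_le']
    · exact cons_mem_babLang_iff.mpr (dvd_zero m)
    · exact cons_mem_babLang_iff.mpr (dvd_zero m)
  refine ⟨hmem, fun i j hij _ => ?_⟩
  have hcount : (babPrefix m i).count 1 = (babPrefix m j).count 1 := by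
    have hi := count_one_of_mem_babLang hij
    have hj := count_one_of_mem_babLang (hmem j)
    rw [List.count_append] at hi hj
    omega
  rcases i with i | _ | _ <;> rcases j with j | _ | _ <;>
    simp [babPrefix, List.count_replicate] at hcount ⊢
  rw [babPrefix_inl_append_babSuffix_inl, cons_mem_babLang_iff] at hij
  exact Fin.ext (Nat.eq_of_dvd_add_sub i.is_lt j.is_lt hij)

/-- For `n ≥ 3`, the language `L₂ = b(a^{n-2})*b` (over the alphabet `{a, b}`,
encoded as `a = 0`, `b = 1` in `Fin 2`) is suffix-free and its nondeterministic
state complexity is exactly `n`. -/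
theorem nsc_b_a_pow_b (n : ℕ) (hn : 3 ≤ n) :
    SuffixFree {w : List (Fin 2) | ∃ k : ℕ, w = 1 :: (List.replicate (k * (n - 2)) 0 ++ [1])} ∧
    NSCeq {w : List (Fin 2) | ∃ k : ℕ, w = 1 :: (List.replicate (k * (n - 2)) 0 ++ [1])} n := by
  have : NeZero (n - 2) := ⟨by omega⟩
  have hcard : Fintype.card (Unit ⊕ ZMod (n - 2) ⊕ Unit) = n := by simp [ZMod.card]; omega
  have hlower := (isFoolingSet_bab (n - 2)).nscge
  rw [Fintype.card_sum, Fintype.card_fin, Fintype.card_bool, Nat.sub_add_cancel (by omega)]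
    at hlower
  exact ⟨suffixFree_babLang (n - 2),
    ⟨_, inferInstance, babNFA (n - 2), babNFA_accepts (n - 2), hcard.le⟩, hlower⟩
end

section
/- Catenation upper bound: let L₁ and L₂ be suffix-free regular languages over an alphabet Σ with NSC(L₁) = m and NSC(L₂) = n. Then NSC(L₁·L₂) ≤ m + n − 1, i.e., there is an NFA with at most m + n − 1 states accepting the concatenation L₁·L₂. -/
open Computability

/-!
An NFA for a suffix-free language can be made non-returning (no transitions into the start state)
without adding states: cutting an accepting run at its last visit to the start state leaves a
run on a suffix of the word, which suffix-freeness forces to be the word itself. The ε-free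
concatenation automaton on `σ₁ ⊕ σ₂` never enters the start state of `M₂` when `M₂` is
non-returning, so that state can be deleted, leaving `m + n - 1` states.
-/

namespace SNFA

variable {α σ σ₁ σ₂ : Type}

def eval (M : SNFA α σ) (w : List α) : Set σ :=
  M.evalFrom {M.start} w

@[simp]
theorem eval_nil (M : SNFA α σ) : M.eval [] = {M.start} :=
  rfl

theorem mem_eval_append_singleton {M : SNFA α σ} {w : List α} {a : α} {q : σ} :
    q ∈ M.eval (w ++ [a]) ↔ ∃ r ∈ M.eval w, q ∈ M.step r a := by
  simp [eval, evalFrom, List.foldl_append, stepSet]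

def IsNonreturning (M : SNFA α σ) : Prop :=
  ∀ q a, M.start ∉ M.step q a

theorem IsNonreturning.start_not_mem_eval {M : SNFA α σ} (hM : M.IsNonreturning)
    {w : List α} (hw : w ≠ []) : M.start ∉ M.eval w := by
  obtain ⟨w, a, rfl⟩ := List.eq_nil_or_concat' w |>.resolve_left hw
  rw [mem_eval_append_singleton]
  rintro ⟨r, -, hr⟩
  exact hM r a hr

def nonreturning (M : SNFA α σ) : SNFA α σ where
  step q a := M.step q a \ {M.start}
  start := M.start
  accept := M.accept

theorem isNonreturning_nonreturning (M : SNFA α σ) : M.nonreturning.IsNonreturning :=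
  fun _ _ h => h.2 rfl

theorem nonreturning_eval_subset (M : SNFA α σ) (w : List α) :
    M.nonreturning.eval w ⊆ M.eval w := by
  induction w using List.reverseRecOn with
  | nil => exact subset_rfl
  | append_singleton w a ih =>
    intro q hq
    obtain ⟨r, hr, hq⟩ := mem_eval_append_singleton.1 hq
    exact mem_eval_append_singleton.2 ⟨r, ih hr, hq.1⟩

theorem exists_suffix_mem_nonreturning_eval {M : SNFA α σ} {w : List α} {q : σ}
    (hq : q ∈ M.eval w) : ∃ v, v <:+ w ∧ q ∈ M.nonreturning.eval v := by
  induction w using List.reverseRecOn generalizing q with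
  | nil => exact ⟨[], List.nil_suffix, hq⟩
  | append_singleton w a ih =>
    obtain ⟨r, hr, hq⟩ := mem_eval_append_singleton.1 hq
    by_cases hqs : q = M.start
    · exact ⟨[], List.nil_suffix, hqs⟩
    · obtain ⟨v, hvw, hrv⟩ := ih hr
      exact ⟨v ++ [a], List.suffix_append_self_iff.2 hvw,
        mem_eval_append_singleton.2 ⟨r, hrv, hq, hqs⟩⟩

theorem accepts_nonreturning {M : SNFA α σ} (hM : SuffixFree M.accepts) :
    M.nonreturning.accepts = M.accepts := by
  ext w
  constructor
  · rintro ⟨q, hq, hqw⟩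
    exact ⟨q, hq, M.nonreturning_eval_subset w hqw⟩
  rintro ⟨q, hq, hqw⟩
  obtain ⟨v, hvw, hqv⟩ := exists_suffix_mem_nonreturning_eval hqw
  obtain rfl : v = w := hM v w ⟨q, hq, M.nonreturning_eval_subset v hqv⟩ ⟨q, hq, hqw⟩ hvw
  exact ⟨q, hq, hqv⟩

def restrict (M : SNFA α σ) (P : σ → Prop) (hstart : P M.start) : SNFA α {q // P q} where
  step q a := Subtype.val ⁻¹' M.step q a
  start := ⟨M.start, hstart⟩
  accept := Subtype.val ⁻¹' M.accept

theorem mem_restrict_eval {M : SNFA α σ} {P : σ → Prop} {hstart : P M.start}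
    (hP : ∀ w, ∀ q ∈ M.eval w, P q) {w : List α} {q : {q // P q}} :
    q ∈ (M.restrict P hstart).eval w ↔ q.1 ∈ M.eval w := by
  induction w using List.reverseRecOn generalizing q with
  | nil => simp [restrict, Subtype.ext_iff]
  | append_singleton w a ih =>
    simp only [mem_eval_append_singleton]
    constructor
    · rintro ⟨r, hr, hq⟩
      exact ⟨r.1, ih.1 hr, hq⟩
    · rintro ⟨r, hr, hq⟩
      exact ⟨⟨r, hP w r hr⟩, ih.2 hr, hq⟩

theorem accepts_restrict {M : SNFA α σ} {P : σ → Prop} {hstart : P M.start}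
    (hP : ∀ w, ∀ q ∈ M.eval w, P q) : (M.restrict P hstart).accepts = M.accepts := by
  ext w
  constructor
  · rintro ⟨q, hq, hqw⟩
    exact ⟨q.1, hq, (mem_restrict_eval hP).1 hqw⟩
  · rintro ⟨q, hq, hqw⟩
    exact ⟨⟨q, hP w q hqw⟩, hq, (mem_restrict_eval hP).2 hqw⟩

/-- Leaving an accepting state of `M₁`, the automaton takes the first step of `M₂` from its start
state, so no ε-transition is needed; it accepts in `M₁` only if `M₂` accepts the empty word. -/
def concat (M₁ : SNFA α σ₁) (M₂ : SNFA α σ₂) : SNFA α (σ₁ ⊕ σ₂) where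
  step
    | .inl p, a =>
      Sum.inl '' M₁.step p a ∪ {s | p ∈ M₁.accept ∧ s ∈ Sum.inr '' M₂.step M₂.start a}
    | .inr q, a => Sum.inr '' M₂.step q a
  start := .inl M₁.start
  accept := Sum.inr '' M₂.accept ∪ {s | M₂.start ∈ M₂.accept ∧ s ∈ Sum.inl '' M₁.accept}

section concat

variable {M₁ : SNFA α σ₁} {M₂ : SNFA α σ₂} {a : α} {p p' : σ₁} {q q' : σ₂}

@[simp]
theorem inl_mem_concat_step_inl :
    .inl p' ∈ (M₁.concat M₂).step (.inl p) a ↔ p' ∈ M₁.step p a := by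
  simp [concat]

@[simp]
theorem inr_mem_concat_step_inl :
    .inr q ∈ (M₁.concat M₂).step (.inl p) a ↔ p ∈ M₁.accept ∧ q ∈ M₂.step M₂.start a := by
  simp [concat]

@[simp]
theorem inl_not_mem_concat_step_inr : .inl p ∉ (M₁.concat M₂).step (.inr q) a := by
  simp [concat]

@[simp]
theorem inr_mem_concat_step_inr :
    .inr q' ∈ (M₁.concat M₂).step (.inr q) a ↔ q' ∈ M₂.step q a := by
  simp [concat]

theorem inl_mem_concat_eval {w : List α} {p : σ₁} :
    .inl p ∈ (M₁.concat M₂).eval w ↔ p ∈ M₁.eval w := by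
  induction w using List.reverseRecOn generalizing p with
  | nil => simp [concat]
  | append_singleton w a ih =>
    simp only [mem_eval_append_singleton]
    constructor
    · rintro ⟨r | r, hr, hp⟩
      · exact ⟨r, ih.1 hr, inl_mem_concat_step_inl.1 hp⟩
      · exact absurd hp inl_not_mem_concat_step_inr
    · rintro ⟨r, hr, hp⟩
      exact ⟨.inl r, ih.2 hr, inl_mem_concat_step_inl.2 hp⟩

theorem inr_mem_concat_eval {w : List α} {q : σ₂} :
    .inr q ∈ (M₁.concat M₂).eval w ↔
      ∃ u v, w = u ++ v ∧ v ≠ [] ∧ u ∈ M₁.accepts ∧ q ∈ M₂.eval v := by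
  induction w using List.reverseRecOn generalizing q with
  | nil => simp [concat]
  | append_singleton w a ih =>
    rw [mem_eval_append_singleton]
    constructor
    · rintro ⟨r | r, hr, hq⟩
      · obtain ⟨hr₁, hq⟩ := inr_mem_concat_step_inl.1 hq
        exact ⟨w, [a], rfl, List.cons_ne_nil _ _, ⟨r, hr₁, inl_mem_concat_eval.1 hr⟩,
          mem_eval_append_singleton (w := []).2 ⟨M₂.start, rfl, hq⟩⟩
      · obtain ⟨u, v, rfl, hv, hu, hrv⟩ := ih.1 hr
        exact ⟨u, v ++ [a], List.append_assoc .., by simp, hu,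
          mem_eval_append_singleton.2 ⟨r, hrv, inr_mem_concat_step_inr.1 hq⟩⟩
    · rintro ⟨u, v, huv, hv, hu, hqv⟩
      obtain ⟨v, b, rfl⟩ := List.eq_nil_or_concat' v |>.resolve_left hv
      obtain ⟨rfl, rfl⟩ : w = u ++ v ∧ a = b := by simpa [← List.append_assoc] using huv
      obtain ⟨r, hrv, hq⟩ := mem_eval_append_singleton.1 hqv
      rcases eq_or_ne v [] with rfl | hv
      · obtain ⟨p, hp, hpu⟩ := hu
        obtain rfl : r = M₂.start := hrv
        exact ⟨.inl p, by simpa using inl_mem_concat_eval.2 hpu, inr_mem_concat_step_inl.2 ⟨hp, hq⟩⟩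
      · exact ⟨.inr r, ih.2 ⟨u, v, rfl, hv, hu, hrv⟩, inr_mem_concat_step_inr.2 hq⟩

theorem accepts_concat : (M₁.concat M₂).accepts = M₁.accepts * M₂.accepts := by
  ext w
  rw [Language.mem_mul]
  constructor
  · rintro ⟨s, hs, hsw⟩
    rcases hs with ⟨q, hq, rfl⟩ | ⟨hnil, p, hp, rfl⟩
    · obtain ⟨u, v, rfl, -, hu, hqv⟩ := inr_mem_concat_eval.1 hsw
      exact ⟨u, hu, v, ⟨q, hq, hqv⟩, rfl⟩
    · exact ⟨w, ⟨p, hp, inl_mem_concat_eval.1 hsw⟩, [], ⟨M₂.start, hnil, rfl⟩, w.append_nil⟩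
  · rintro ⟨u, hu, v, ⟨q, hq, hqv⟩, rfl⟩
    rcases eq_or_ne v [] with rfl | hv
    · obtain ⟨p, hp, hpu⟩ := hu
      obtain rfl : q = M₂.start := hqv
      refine ⟨.inl p, .inr ⟨hq, p, hp, rfl⟩, ?_⟩
      rw [List.append_nil]
      exact inl_mem_concat_eval.2 hpu
    · exact ⟨.inr q, .inl ⟨q, hq, rfl⟩, inr_mem_concat_eval.2 ⟨u, v, rfl, hv, hu, hqv⟩⟩

end concat

end SNFA

theorem catenation_upper_general {α : Type} (L₁ L₂ : Language α) (m n : ℕ)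
    (hsf₂ : SuffixFree L₂)
    (hm : NSCeq L₁ m) (hn : NSCeq L₂ n) :
    NSCle (L₁ * L₂) (m + n - 1) := by
  classical
  obtain ⟨⟨σ₁, _, M₁, rfl, hcard₁⟩, -⟩ := hm
  obtain ⟨⟨σ₂, _, M₂, rfl, hcard₂⟩, -⟩ := hn
  set C := M₁.concat M₂.nonreturning
  have hunreachable : ∀ w, ∀ s ∈ C.eval w, s ≠ .inr M₂.start := by
    rintro w s hs rfl
    obtain ⟨-, v, -, hv, -, hv₂⟩ := SNFA.inr_mem_concat_eval.1 hs
    exact M₂.isNonreturning_nonreturning.start_not_mem_eval hv hv₂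
  refine ⟨_, inferInstance, C.restrict (· ≠ .inr M₂.start) (hunreachable [] _ rfl), ?_, ?_⟩
  · rw [SNFA.accepts_restrict hunreachable, SNFA.accepts_concat,
      SNFA.accepts_nonreturning hsf₂]
  · have hcard : Fintype.card {s : σ₁ ⊕ σ₂ // s ≠ .inr M₂.start} =
        Fintype.card σ₁ + Fintype.card σ₂ - 1 := by
      rw [← Fintype.card_sum]; exact Set.card_ne_eq _
    omega

/-- **Catenation, upper bound.** If `L₁` and `L₂` are suffix-free regular
languages with nondeterministic state complexities `m` and `n`, then some NFA
with at most `m + n - 1` states accepts the concatenation `L₁ * L₂`. -/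
theorem catenation_upper {α : Type} (L₁ L₂ : Language α) (m n : ℕ)
    (hsf₁ : SuffixFree L₁) (hsf₂ : SuffixFree L₂)
    (hm : NSCeq L₁ m) (hn : NSCeq L₂ n) :
    NSCle (L₁ * L₂) (m + n - 1) :=
  catenation_upper_general L₁ L₂ m n hsf₂ hm hn
end

section
/- Catenation lower bound witness: let m, n ≥ 1 and, over the alphabet {a}, let L₁ = {a^{m-1}} and L₂ = {a^{n-1}}. Then L₁ and L₂ are suffix-free, NSC(L₁) = m, NSC(L₂) = n, and NSC(L₁·L₂) = m + n − 1. -/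
open Computability

/-- The singleton language `{a^{m-1}}` over the unary alphabet `{a}`
(encoded as `Fin 1`, with `a = 0`). -/
def unaryLang (m : ℕ) : Language (Fin 1) :=
  {w | w = List.replicate (m - 1) 0}

/-!
An NFA accepting a shortest word `w` of `L` has at least `|w| + 1` states: pick, for each prefix
length `i ≤ |w|`, a state reached after `take i w` from which `drop i w` leads to acceptance.
If two of these coincide for `i < j`, the NFA also accepts `take i w ++ drop j w`, which is
shorter than `w`. Since `{a^{m-1}} · {a^{n-1}} = {a^{m+n-2}}`, all three state complexities
follow from this bound together with the obvious chain automata.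
-/

namespace SNFA

variable {α σ : Type} (M : SNFA α σ)

@[simp]
theorem stepSet_singleton (p : σ) (a : α) : M.stepSet {p} a = M.step p a := by
  simp [stepSet]

theorem mem_evalFrom_iff_exists {S : Set σ} {w : List α} {q : σ} :
    q ∈ M.evalFrom S w ↔ ∃ p ∈ S, q ∈ M.evalFrom {p} w := by
  induction w generalizing S with
  | nil => simp [evalFrom]
  | cons a w ih =>
    simp only [evalFrom, List.foldl_cons] at ih ⊢
    rw [ih]
    simp only [stepSet_singleton]
    simp only [stepSet, Set.mem_iUnion, exists_prop]
    constructor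
    · rintro ⟨r, ⟨p, hp, hr⟩, hq⟩
      exact ⟨p, hp, ih.2 ⟨r, hr, hq⟩⟩
    · rintro ⟨p, hp, hq⟩
      obtain ⟨r, hr, hq⟩ := ih.1 hq
      exact ⟨r, ⟨p, hp, hr⟩, hq⟩

theorem mem_evalFrom_append {S : Set σ} {u v : List α} {q : σ} :
    q ∈ M.evalFrom S (u ++ v) ↔ ∃ p ∈ M.evalFrom S u, q ∈ M.evalFrom {p} v := by
  rw [evalFrom_append, mem_evalFrom_iff_exists]

theorem length_lt_card_of_mem_accepts [Fintype σ] {w : List α} (hw : w ∈ M.accepts)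
    (hmin : ∀ v ∈ M.accepts, w.length ≤ v.length) : w.length < Fintype.card σ := by
  obtain ⟨q, hq, hwq⟩ := hw
  have hsplit : ∀ i : Fin (w.length + 1), ∃ p ∈ M.evalFrom {M.start} (w.take i),
      q ∈ M.evalFrom {p} (w.drop i) := fun i =>
    M.mem_evalFrom_append.1 ((List.take_append_drop i w).symm ▸ hwq)
  choose f hf_take hf_drop using hsplit
  have hf_inj : Function.Injective f := by
    intro i j hij
    by_contra hne
    wlog hlt : i < j generalizing i j
    · exact this hij.symm (Ne.symm hne) (lt_of_le_of_ne (not_lt.1 hlt) (Ne.symm hne))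
    have hshort : w.take i ++ w.drop j ∈ M.accepts :=
      ⟨q, hq, M.mem_evalFrom_append.2 ⟨f i, hf_take i, hij ▸ hf_drop j⟩⟩
    have hlen := hmin _ hshort
    simp only [List.length_append, List.length_take, List.length_drop] at hlen
    omega
  simpa using Fintype.card_le_of_injective f hf_inj

def chain (α : Type) (k : ℕ) : SNFA α (Fin (k + 1)) where
  step i _ := {j | (j : ℕ) = i + 1}
  start := 0
  accept := {Fin.last k}

theorem evalFrom_chain (k : ℕ) (w : List α) :
    (chain α k).evalFrom {(chain α k).start} w = {i : Fin (k + 1) | (i : ℕ) = w.length} := by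
  induction w using List.reverseRecOn with
  | nil =>
    ext i
    exact Fin.ext_iff
  | append_singleton u a ih =>
    rw [evalFrom_append, ih]
    ext j
    simp only [evalFrom, List.foldl_cons, List.foldl_nil, stepSet, chain, Set.mem_iUnion,
      Set.mem_ofPred_eq, exists_prop, List.length_append, List.length_singleton]
    constructor
    · rintro ⟨i, hi, hj⟩
      omega
    · intro hj
      exact ⟨⟨u.length, by omega⟩, rfl, hj⟩

theorem accepts_chain (k : ℕ) : (chain α k).accepts = {w | w.length = k} := by
  ext w
  show (∃ q ∈ (chain α k).accept, q ∈ (chain α k).evalFrom {(chain α k).start} w) ↔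
    w.length = k
  rw [evalFrom_chain]
  simp [chain, eq_comm]

end SNFA

section StateComplexity

variable {α : Type}

theorem nscge_length_succ {L : Language α} {w : List α} (hw : w ∈ L)
    (hmin : ∀ v ∈ L, w.length ≤ v.length) : NSCge L (w.length + 1) := by
  intro σ _ M hM
  subst hM
  exact M.length_lt_card_of_mem_accepts hw hmin

theorem nsceq_length_eq [Nonempty α] (k : ℕ) : NSCeq {w : List α | w.length = k} (k + 1) := by
  refine ⟨⟨_, inferInstance, SNFA.chain α k, SNFA.accepts_chain k, by simp⟩, ?_⟩
  have hw : List.replicate k (Classical.arbitrary α) ∈ {w : List α | w.length = k} :=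
    List.length_replicate
  simpa using nscge_length_succ hw fun v (hv : v.length = k) => by simp [hv]

end StateComplexity

theorem mem_unaryLang_iff_length {k : ℕ} {w : List (Fin 1)} :
    w ∈ unaryLang k ↔ w.length = k - 1 := by
  show w = _ ↔ _
  simp [List.eq_replicate_iff, Subsingleton.elim _ (0 : Fin 1)]

theorem suffixFree_unaryLang (k : ℕ) : SuffixFree (unaryLang k) :=
  fun _ _ hu hv _ => hu.trans hv.symm

theorem nsceq_unaryLang {k : ℕ} (hk : 1 ≤ k) : NSCeq (unaryLang k) k := by
  obtain ⟨j, rfl⟩ : ∃ j, k = j + 1 := ⟨k - 1, by omega⟩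
  have hlen : unaryLang (j + 1) = {w | w.length = j} :=
    Set.ext fun _ => mem_unaryLang_iff_length
  rw [hlen]
  exact nsceq_length_eq j

theorem unaryLang_mul_unaryLang {m n : ℕ} (hm : 1 ≤ m) (hn : 1 ≤ n) :
    unaryLang m * unaryLang n = unaryLang (m + n - 1) := by
  ext w
  simp only [Language.mem_mul, mem_unaryLang_iff_length]
  constructor
  · rintro ⟨u, hu, v, hv, rfl⟩
    rw [List.length_append]
    omega
  · intro hw
    refine ⟨w.take (m - 1), by simp; omega, w.drop (m - 1), by simp; omega, w.take_append_drop _⟩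

/-- **Catenation, lower bound witness.** For `m, n ≥ 1`, the languages
`L₁ = {a^{m-1}}` and `L₂ = {a^{n-1}}` over the unary alphabet `{a}` are
suffix-free, `NSC(L₁) = m`, `NSC(L₂) = n`, and `NSC(L₁ · L₂) = m + n - 1`. -/
theorem catenation_lower_witness (m n : ℕ) (hm : 1 ≤ m) (hn : 1 ≤ n) :
    SuffixFree (unaryLang m) ∧ SuffixFree (unaryLang n) ∧
    NSCeq (unaryLang m) m ∧ NSCeq (unaryLang n) n ∧
    NSCeq (unaryLang m * unaryLang n) (m + n - 1) := by
  refine ⟨suffixFree_unaryLang m, suffixFree_unaryLang n, nsceq_unaryLang hm,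
    nsceq_unaryLang hn, ?_⟩
  rw [unaryLang_mul_unaryLang hm hn]
  exact nsceq_unaryLang (by omega)
end

section
/- Intersection lower bound witness: let m, n ≥ 2 and, over the alphabet {a,b,c}, let L₁ = { c·w : w ∈ {a,b}*, the number of a's in w is ≡ 0 (mod m−1) } and L₂ = { c·w : w ∈ {a,b}*, the number of b's in w is ≡ 0 (mod n−1) }. Then L₁ and L₂ are suffix-free, NSC(L₁) = m, NSC(L₂) = n, and NSC(L₁ ∩ L₂) = mn − (m + n) + 2. -/
open Computability

/-- The language `{ c·w : w ∈ {a,b}*, |w|_a ≡ 0 (mod m-1) }` over the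
alphabet `{a, b, c}` (encoded as `a = 0`, `b = 1`, `c = 2` in `Fin 3`). -/
def interLangA (m : ℕ) : Language (Fin 3) :=
  {w | ∃ v : List (Fin 3), w = 2 :: v ∧ (∀ x ∈ v, x = 0 ∨ x = 1) ∧
        v.count 0 % (m - 1) = 0}

/-- The language `{ c·w : w ∈ {a,b}*, |w|_b ≡ 0 (mod n-1) }` over the
alphabet `{a, b, c}` (encoded as `a = 0`, `b = 1`, `c = 2` in `Fin 3`). -/
def interLangB (n : ℕ) : Language (Fin 3) :=
  {w | ∃ v : List (Fin 3), w = 2 :: v ∧ (∀ x ∈ v, x = 0 ∨ x = 1) ∧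
        v.count 1 % (n - 1) = 0}

/-! Write `m = p + 1`, `n = q + 1` and `L_{p,q} = interLangA (p + 1) ⊓ interLangB (q + 1)`. An
initial state followed by a grid of counters of `a`'s mod `p` and `b`'s mod `q` recognises `L_{p,q}`
with `p * q + 1` states. Conversely, the prefixes `c aⁱ bʲ` (for `(i, j) ∈ ℤ/p × ℤ/q`) and the empty
word, completed by `a⁻ⁱ b⁻ʲ` and by `c` respectively, form a fooling set of that size. The single
languages are the cases `q = 1` and `p = 1`, and suffix-freeness holds because `c` occurs only as
the first letter. -/

namespace SNFA

variable {α σ : Type}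

@[simp]
lemma toNFA_step (M : SNFA α σ) : M.toNFA.step = M.step := rfl

lemma toNFA_evalFrom (M : SNFA α σ) : M.toNFA.evalFrom = M.evalFrom := rfl

lemma mem_accepts_iff (M : SNFA α σ) (w : List α) :
    w ∈ M.accepts ↔ ∃ q ∈ M.accept, q ∈ M.evalFrom {M.start} w :=
  Iff.rfl

end SNFA

namespace NFA

variable {α σ : Type}

@[simp]
lemma evalFrom_empty (M : NFA α σ) (x : List α) : M.evalFrom ∅ x = ∅ := by
  induction x <;> simp [*]

theorem card_le_of_fooling {ι : Type} [Fintype ι] [Fintype σ] (M : NFA α σ)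
    (x y : ι → List α) (hmem : ∀ i, x i ++ y i ∈ M.accepts)
    (hcross : ∀ i j, x i ++ y j ∈ M.accepts → x j ++ y i ∈ M.accepts → i = j) :
    Fintype.card ι ≤ Fintype.card σ := by
  have mem_accepts_append {u v : List α} :
      u ++ v ∈ M.accepts ↔ ∃ s ∈ M.eval u, v ∈ M.acceptsFrom {s} := by
    rw [accepts_eq_acceptsFrom_start, append_mem_acceptsFrom, mem_acceptsFrom,
      evalFrom_eq_biUnion_singleton M (M.evalFrom M.start u)]
    simp only [Set.mem_iUnion, exists_prop, mem_acceptsFrom, eval]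
    tauto
  choose s hs hacc using fun i => mem_accepts_append.1 (hmem i)
  refine Fintype.card_le_of_injective s fun i j hij => hcross i j ?_ ?_
  · exact mem_accepts_append.2 ⟨s i, hs i, hij ▸ hacc j⟩
  · exact mem_accepts_append.2 ⟨s j, hs j, hij ▸ hacc i⟩

end NFA

theorem nscGe_of_fooling {α ι : Type} [Fintype ι] {L : Language α} (x y : ι → List α)
    (hmem : ∀ i, x i ++ y i ∈ L)
    (hcross : ∀ i j, x i ++ y j ∈ L → x j ++ y i ∈ L → i = j) :
    NSCge L (Fintype.card ι) := by
  rintro σ _ M rfl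
  exact M.toNFA.card_le_of_fooling x y hmem hcross

theorem suffixFree_of_forall_eq_cons {α : Type} {L : Language α} (c : α)
    (hL : ∀ w ∈ L, ∃ v, w = c :: v ∧ c ∉ v) : SuffixFree L := by
  rintro u w hu hw ⟨t, rfl⟩
  obtain ⟨u', rfl, -⟩ := hL _ hu
  obtain ⟨w', hw', hcw'⟩ := hL _ hw
  cases t with
  | nil => rfl
  | cons d t =>
    simp only [List.cons_append, List.cons.injEq] at hw'
    exact absurd (hw'.2 ▸ List.mem_append_right t List.mem_cons_self) hcw'

lemma two_notMem_of_forall_eq_or_eq {v : List (Fin 3)} (hv : ∀ x ∈ v, x = 0 ∨ x = 1) :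
    (2 : Fin 3) ∉ v :=
  fun h => by rcases hv 2 h with h | h <;> exact absurd h (by decide)

lemma mem_interLangA_iff {p : ℕ} {w : List (Fin 3)} :
    w ∈ interLangA (p + 1) ↔
      ∃ v, w = 2 :: v ∧ (∀ x ∈ v, x = 0 ∨ x = 1) ∧ (v.count 0 : ZMod p) = 0 := by
  simp only [ZMod.natCast_eq_zero_iff, Nat.dvd_iff_mod_eq_zero]
  exact Iff.rfl

lemma mem_interLangB_iff {q : ℕ} {w : List (Fin 3)} :
    w ∈ interLangB (q + 1) ↔
      ∃ v, w = 2 :: v ∧ (∀ x ∈ v, x = 0 ∨ x = 1) ∧ (v.count 1 : ZMod q) = 0 := by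
  simp only [ZMod.natCast_eq_zero_iff, Nat.dvd_iff_mod_eq_zero]
  exact Iff.rfl

lemma mem_interLangA_inf_interLangB_iff {p q : ℕ} {w : List (Fin 3)} :
    w ∈ interLangA (p + 1) ⊓ interLangB (q + 1) ↔ ∃ v, w = 2 :: v ∧ (∀ x ∈ v, x = 0 ∨ x = 1) ∧
      (v.count 0 : ZMod p) = 0 ∧ (v.count 1 : ZMod q) = 0 := by
  rw [Language.mem_inf, mem_interLangA_iff, mem_interLangB_iff]
  constructor
  · rintro ⟨⟨v, rfl, hv, hp⟩, ⟨_, hw, -, hq⟩⟩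
    obtain rfl := (List.cons.inj hw).2
    exact ⟨v, rfl, hv, hp, hq⟩
  · rintro ⟨v, rfl, hv, hp, hq⟩
    exact ⟨⟨v, rfl, hv, hp⟩, ⟨v, rfl, hv, hq⟩⟩

lemma cons_two_mem_interLangA_inf_interLangB_iff {p q : ℕ} {v : List (Fin 3)} :
    2 :: v ∈ interLangA (p + 1) ⊓ interLangB (q + 1) ↔ (∀ x ∈ v, x = 0 ∨ x = 1) ∧
      (v.count 0 : ZMod p) = 0 ∧ (v.count 1 : ZMod q) = 0 := by
  rw [mem_interLangA_inf_interLangB_iff]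
  simp

lemma interLangA_inf_interLangB_one (p : ℕ) :
    interLangA (p + 1) ⊓ interLangB (1 + 1) = interLangA (p + 1) :=
  inf_eq_left.2 fun _ ⟨v, hw, hv, _⟩ => ⟨v, hw, hv, Nat.mod_one _⟩

lemma interLangA_one_inf_interLangB (q : ℕ) :
    interLangA (1 + 1) ⊓ interLangB (q + 1) = interLangB (q + 1) :=
  inf_eq_right.2 fun _ ⟨v, hw, hv, _⟩ => ⟨v, hw, hv, Nat.mod_one _⟩

/-- `none` is the initial state, before the leading `c`; `some (i, j)` has read `c` followed by
`i` letters `a` and `j` letters `b` modulo `(p, q)`. -/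
def counterNFA (p q : ℕ) : SNFA (Fin 3) (Option (ZMod p × ZMod q)) where
  step
    | none, a => if a = 2 then {some 0} else ∅
    | some s, a => if a = 0 then {some (s + (1, 0))} else if a = 1 then {some (s + (0, 1))} else ∅
  start := none
  accept := {some 0}

section counterNFA

variable {p q : ℕ}

@[simp] lemma counterNFA_start : (counterNFA p q).start = none := rfl

@[simp] lemma counterNFA_accept : (counterNFA p q).accept = {some 0} := rfl

@[simp] lemma counterNFA_step_none (a : Fin 3) :
    (counterNFA p q).step none a = if a = 2 then {some 0} else ∅ := rfl

@[simp] lemma counterNFA_step_some_zero (s : ZMod p × ZMod q) :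
    (counterNFA p q).step (some s) 0 = {some (s + (1, 0))} := rfl

@[simp] lemma counterNFA_step_some_one (s : ZMod p × ZMod q) :
    (counterNFA p q).step (some s) 1 = {some (s + (0, 1))} := rfl

@[simp] lemma counterNFA_step_some_two (s : ZMod p × ZMod q) :
    (counterNFA p q).step (some s) 2 = ∅ := rfl

end counterNFA

lemma mem_counterNFA_evalFrom_some_iff {p q : ℕ} (s : ZMod p × ZMod q) (v : List (Fin 3))
    (t : Option (ZMod p × ZMod q)) :
    t ∈ (counterNFA p q).toNFA.evalFrom {some s} v ↔
      (∀ x ∈ v, x = 0 ∨ x = 1) ∧ t = some (s + ((v.count 0 : ZMod p), (v.count 1 : ZMod q))) := by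
  induction v generalizing s with
  | nil => simp [Prod.mk_zero_zero]
  | cons a v ih =>
    rw [NFA.evalFrom_cons, NFA.stepSet_singleton]
    fin_cases a
    · simp [ih, add_assoc, add_comm (1 : ZMod p)]
    · simp [ih, add_assoc, add_comm (1 : ZMod q)]
    · simp

theorem counterNFA_accepts (p q : ℕ) :
    (counterNFA p q).accepts = interLangA (p + 1) ⊓ interLangB (q + 1) := by
  ext w
  rw [mem_interLangA_inf_interLangB_iff, SNFA.mem_accepts_iff, ← SNFA.toNFA_evalFrom]
  rcases w with _ | ⟨a, v⟩
  · simp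
  · fin_cases a <;> simp [mem_counterNFA_evalFrom_some_iff, Prod.ext_iff, eq_comm]

def abWord (i j : ℕ) : List (Fin 3) := List.replicate i 0 ++ List.replicate j 1

lemma abWord_letters (i j : ℕ) : ∀ x ∈ abWord i j, x = 0 ∨ x = 1 := by
  intro x hx
  rcases List.mem_append.1 hx with h | h <;> simp [List.eq_of_mem_replicate h]

@[simp] lemma count_zero_abWord (i j : ℕ) : (abWord i j).count 0 = i := by
  simp [abWord, List.count_replicate]

@[simp] lemma count_one_abWord (i j : ℕ) : (abWord i j).count 1 = j := by
  simp [abWord, List.count_replicate]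

section LowerBound

variable (p q : ℕ)

def foolingPrefix : Option (ZMod p × ZMod q) → List (Fin 3)
  | none => []
  | some (i, j) => 2 :: abWord i.val j.val

def foolingSuffix : Option (ZMod p × ZMod q) → List (Fin 3)
  | none => [2]
  | some (i, j) => abWord (-i).val (-j).val

variable [NeZero p] [NeZero q]

variable {p q} in
lemma foolingPrefix_append_foolingSuffix_mem_iff (s t : Option (ZMod p × ZMod q)) :
    foolingPrefix p q s ++ foolingSuffix p q t ∈ interLangA (p + 1) ⊓ interLangB (q + 1) ↔
      s = t := by
  rcases s with _ | ⟨i, j⟩ <;> rcases t with _ | ⟨i', j'⟩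
  · simp only [foolingPrefix, foolingSuffix, List.nil_append, iff_true]
    exact cons_two_mem_interLangA_inf_interLangB_iff.2 (by simp)
  · simp only [foolingPrefix, foolingSuffix, List.nil_append, reduceCtorEq, iff_false]
    rintro h
    obtain ⟨v, hv, -⟩ := mem_interLangA_inf_interLangB_iff.1 h
    exact two_notMem_of_forall_eq_or_eq (abWord_letters _ _) (hv ▸ List.mem_cons_self)
  · simp only [foolingPrefix, foolingSuffix, List.cons_append, reduceCtorEq, iff_false,
      cons_two_mem_interLangA_inf_interLangB_iff, not_and]
    exact fun h => absurd (by simp) (two_notMem_of_forall_eq_or_eq h)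
  · simp only [foolingPrefix, foolingSuffix, List.cons_append,
      cons_two_mem_interLangA_inf_interLangB_iff, List.count_append, count_zero_abWord,
      count_one_abWord, Nat.cast_add, ZMod.natCast_zmod_val, ← sub_eq_add_neg, sub_eq_zero,
      Option.some.injEq, Prod.mk.injEq, List.forall_mem_append]
    exact and_iff_right ⟨abWord_letters _ _, abWord_letters _ _⟩

theorem nscGe_interLangA_inf_interLangB :
    NSCge (interLangA (p + 1) ⊓ interLangB (q + 1)) (p * q + 1) := by
  have hcard : Fintype.card (Option (ZMod p × ZMod q)) = p * q + 1 := by simp [ZMod.card]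
  rw [← hcard]
  exact nscGe_of_fooling (foolingPrefix p q) (foolingSuffix p q)
    (fun s => (foolingPrefix_append_foolingSuffix_mem_iff s s).2 rfl)
    (fun s t h _ => (foolingPrefix_append_foolingSuffix_mem_iff s t).1 h)

end LowerBound

theorem nscEq_interLangA_inf_interLangB (p q : ℕ) [NeZero p] [NeZero q] :
    NSCeq (interLangA (p + 1) ⊓ interLangB (q + 1)) (p * q + 1) :=
  ⟨⟨_, inferInstance, counterNFA p q, counterNFA_accepts p q, by simp [ZMod.card]⟩,
    nscGe_interLangA_inf_interLangB p q⟩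

theorem suffixFree_interLangA (m : ℕ) : SuffixFree (interLangA m) :=
  suffixFree_of_forall_eq_cons 2 fun _ ⟨v, hw, hv, _⟩ => ⟨v, hw, two_notMem_of_forall_eq_or_eq hv⟩

theorem suffixFree_interLangB (n : ℕ) : SuffixFree (interLangB n) :=
  suffixFree_of_forall_eq_cons 2 fun _ ⟨v, hw, hv, _⟩ => ⟨v, hw, two_notMem_of_forall_eq_or_eq hv⟩

/-- **Intersection, lower bound witness.** For `m, n ≥ 2`, the languages
`L₁ = { cw : |w|_a ≡ 0 (mod m-1) }` and `L₂ = { cw : |w|_b ≡ 0 (mod n-1) }`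
over `{a, b, c}` are suffix-free, `NSC(L₁) = m`, `NSC(L₂) = n`, and
`NSC(L₁ ∩ L₂) = m * n - (m + n) + 2`. -/
theorem intersection_lower_witness (m n : ℕ) (hm : 2 ≤ m) (hn : 2 ≤ n) :
    SuffixFree (interLangA m) ∧ SuffixFree (interLangB n) ∧
    NSCeq (interLangA m) m ∧ NSCeq (interLangB n) n ∧
    NSCeq (interLangA m ⊓ interLangB n) (m * n - (m + n) + 2) := by
  obtain ⟨p, rfl⟩ : ∃ p, m = p + 1 := ⟨m - 1, by omega⟩
  obtain ⟨q, rfl⟩ : ∃ q, n = q + 1 := ⟨n - 1, by omega⟩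
  have : NeZero p := ⟨by omega⟩
  have : NeZero q := ⟨by omega⟩
  have hA := nscEq_interLangA_inf_interLangB p 1
  rw [interLangA_inf_interLangB_one, mul_one] at hA
  have hB := nscEq_interLangA_inf_interLangB 1 q
  rw [interLangA_one_inf_interLangB, one_mul] at hB
  have hcard : (p + 1) * (q + 1) - (p + 1 + (q + 1)) + 2 = p * q + 1 := by
    have : 1 ≤ p * q := Nat.one_le_iff_ne_zero.2 (mul_ne_zero (NeZero.ne p) (NeZero.ne q))
    rw [show (p + 1) * (q + 1) = p * q + p + q + 1 by ring]
    omega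
  rw [hcard]
  exact ⟨suffixFree_interLangA _, suffixFree_interLangB _, hA, hB,
    nscEq_interLangA_inf_interLangB p q⟩
end

section
/- Reversal lower bound witness: let m ≥ 4 and, over the alphabet {a,b,c,d}, let L = { d a^{k(m-3)} x : k ≥ 0, x ∈ b* ∪ c* } (the language of the regular expression d(a^{m-3})*(b* + c*)). Then L is suffix-free, NSC(L) ≤ m, and NSC(L^R) = m + 1, i.e., every NFA accepting the reversal L^R has at least m + 1 states and some NFA with m + 1 states accepts L^R. -/
open Computability

/-- The reversal of a language: `L^R = { w^R : w ∈ L }`. -/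
def revLang {α : Type} (L : Language α) : Language α :=
  {w | w.reverse ∈ L}

/-- The language `d(a^{m-3})*(b* + c*)` over `{a, b, c, d}` (encoded as
`a = 0`, `b = 1`, `c = 2`, `d = 3` in `Fin 4`). -/
def revWitness (m : ℕ) : Language (Fin 4) :=
  {w | ∃ k j : ℕ,
        w = 3 :: (List.replicate (k * (m - 3)) 0 ++ List.replicate j 1) ∨
        w = 3 :: (List.replicate (k * (m - 3)) 0 ++ List.replicate j 2)}

/-
Write `n = m - 3` and `a, b, c, d = 0, 1, 2, 3`.  `L` is suffix-free since `d` occurs in its words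
only as the first letter.  The upper bounds are the evident automata around an `a`-cycle of
length `n`: for `L` a start state, the cycle and a `b`- and a `c`-loop (`n + 3` states); for `L^R`
a start state, a `b`- and a `c`-loop, the cycle and a final state reached by `d` (`n + 4` states).
Their languages are checked state by state: a family of languages satisfying the one-letter
equations of an NFA is its family of state languages.

For the lower bound, the `n + 3` pairs `(d, ε)`, `(b, bd)`, `(c, cd)` and `(b a^(r+1), a^s d)` with
`r + 1 + s ≡ 0 (mod n)`, one for each residue `r`, satisfy `x_i y_i ∈ L^R`, and for `i ≠ j` one of
`x_i y_j`, `x_j y_i` is not in `L^R`.  So the states reached after `x_i` on accepting runs of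
`x_i y_i` are pairwise distinct, and none is the start state since each `x_i` followed by a suitable
word of `L^R` leaves `L^R`.
-/

namespace NFA

variable {α σ : Type*} (M : NFA α σ)

theorem mem_acceptsFrom_iff_exists_singleton {S : Set σ} {w : List α} :
    w ∈ M.acceptsFrom S ↔ ∃ q ∈ S, w ∈ M.acceptsFrom {q} := by
  simp only [mem_acceptsFrom, mem_evalFrom_iff_exists (S := S)]
  tauto

theorem acceptsFrom_singleton_eq (R : σ → Language α)
    (hnil : ∀ q, [] ∈ R q ↔ q ∈ M.accept)
    (hcons : ∀ q a w, a :: w ∈ R q ↔ ∃ p ∈ M.step q a, w ∈ R p) (q : σ) :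
    M.acceptsFrom {q} = R q := by
  ext w
  induction w generalizing q with
  | nil => simp [hnil]
  | cons a w ih =>
    simp only [cons_mem_acceptsFrom, stepSet_singleton, hcons, ← ih]
    exact M.mem_acceptsFrom_iff_exists_singleton

end NFA

namespace SNFA

variable {α σ : Type}

theorem accepts_eq_acceptsFrom_start (M : SNFA α σ) :
    M.accepts = M.toNFA.acceptsFrom {M.start} := rfl

theorem append_mem_accepts {M : SNFA α σ} {x y : List α} :
    x ++ y ∈ M.accepts ↔ ∃ q ∈ M.toNFA.evalFrom {M.start} x, y ∈ M.toNFA.acceptsFrom {q} := by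
  rw [accepts_eq_acceptsFrom_start, NFA.append_mem_acceptsFrom,
    NFA.mem_acceptsFrom_iff_exists_singleton]

end SNFA

theorem NSCge_of_foolingSet {α ι : Type} [Fintype ι] {L : Language α} (x y : ι → List α)
    (hmem : ∀ i, x i ++ y i ∈ L)
    (hfool : ∀ i j, i ≠ j → x i ++ y j ∉ L ∨ x j ++ y i ∉ L)
    (hsep : ∀ i, ∃ v ∈ L, x i ++ v ∉ L) :
    NSCge L (Fintype.card ι + 1) := by
  intro σ _ M hM
  subst hM
  choose q hq hqy using fun i => SNFA.append_mem_accepts.1 (hmem i)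
  have q_injective : Function.Injective q := by
    intro i j hij
    by_contra hne
    rcases hfool i j hne with h | h
    · exact h (SNFA.append_mem_accepts.2 ⟨q i, hq i, hij ▸ hqy j⟩)
    · exact h (SNFA.append_mem_accepts.2 ⟨q j, hq j, hij ▸ hqy i⟩)
  have start_not_mem : M.start ∉ Set.range q := by
    rintro ⟨i, hi⟩
    obtain ⟨v, hv, hxv⟩ := hsep i
    rw [SNFA.accepts_eq_acceptsFrom_start] at hv
    exact hxv (SNFA.append_mem_accepts.2 ⟨q i, hq i, hi ▸ hv⟩)
  exact Fintype.card_lt_of_injective_of_notMem q q_injective start_not_mem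

theorem suffixFree_of_forall_eq_cons_notMem {α : Type} {L : Language α} (d : α)
    (h : ∀ w ∈ L, ∃ v, w = d :: v ∧ d ∉ v) : SuffixFree L := by
  rintro u v hu hv ⟨_ | ⟨c, p⟩, rfl⟩
  · rfl
  · obtain ⟨u', rfl, -⟩ := h u hu
    obtain ⟨v', hv', hd⟩ := h _ hv
    obtain ⟨-, rfl⟩ := List.cons_eq_cons.1 hv'
    simp at hd

theorem ZMod.natCast_eq_zero_iff_exists_mul {n t : ℕ} : (t : ZMod n) = 0 ↔ ∃ k, t = k * n := by
  simp [ZMod.natCast_eq_zero_iff, Dvd.dvd, mul_comm]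

-- Written with `w ∈ ({w | p w} : Language α)`, the membership would elaborate at `Set (List α)`
-- and the lemma would never fire.
@[simp]
theorem Language.mem_setOf {α : Type*} {p : List α → Prop} {w : List α} :
    @Membership.mem (List α) (Language α) _ {w | p w} w ↔ p w := Iff.rfl

theorem List.cons_eq_replicate_append {α : Type} {a x : α} {w v : List α} {t : ℕ} :
    a :: w = replicate t x ++ v ↔
      (t = 0 ∧ a :: w = v) ∨ ∃ s, t = s + 1 ∧ a = x ∧ w = replicate s x ++ v := by
  cases t <;> simp [replicate_succ, eq_comm]

namespace ReversalWitness

open List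

variable {n : ℕ} {r : ZMod n} {a x : Fin 4} {w : List (Fin 4)}

def runLetter (b : Bool) : Fin 4 := bif b then 1 else 2

def zerosThenThree (n : ℕ) (r : ZMod n) : Language (Fin 4) :=
  {w | ∃ t : ℕ, (t : ZMod n) = r ∧ w = replicate t 0 ++ [3]}

def runThenZerosThree (n : ℕ) (x : Fin 4) : Language (Fin 4) :=
  {w | ∃ j : ℕ, ∃ v ∈ zerosThenThree n 0, w = replicate j x ++ v}

def zerosThenRun (n : ℕ) (r : ZMod n) : Language (Fin 4) :=
  {w | ∃ (t : ℕ) (b : Bool) (v : List (Fin 4)),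
    (t : ZMod n) = r ∧ (∀ c ∈ v, c = runLetter b) ∧ w = replicate t 0 ++ v}

theorem notMem_zerosThenThree_of_three_notMem (h : 3 ∉ w) : w ∉ zerosThenThree n r := by
  rintro ⟨t, -, rfl⟩
  simp at h

theorem cons_mem_zerosThenThree :
    a :: w ∈ zerosThenThree n r ↔
      (a = 0 ∧ w ∈ zerosThenThree n (r - 1)) ∨ (a = 3 ∧ r = 0 ∧ w = []) := by
  constructor
  · rintro ⟨t, rfl, h⟩
    rcases cons_eq_replicate_append.1 h with ⟨rfl, h⟩ | ⟨s, rfl, rfl, rfl⟩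
    · simp_all
    · exact Or.inl ⟨rfl, s, by push_cast; ring, rfl⟩
  · rintro (⟨rfl, t, ht, rfl⟩ | ⟨rfl, rfl, rfl⟩)
    · exact ⟨t + 1, by push_cast; rw [ht]; ring, by simp [replicate_succ]⟩
    · exact ⟨0, by simp, rfl⟩

theorem replicate_append_mem_zerosThenThree {t : ℕ} :
    replicate t 0 ++ w ∈ zerosThenThree n r ↔ w ∈ zerosThenThree n (r - t) := by
  induction t generalizing r with
  | zero => simp
  | succ t ih =>
    rw [show r - ((t + 1 : ℕ) : ZMod n) = r - 1 - t by push_cast; ring]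
    simp [replicate_succ, cons_mem_zerosThenThree, ih]

theorem mem_runThenZerosThree_of_notMem (hx : x ∉ w) :
    w ∈ runThenZerosThree n x ↔ w ∈ zerosThenThree n 0 := by
  constructor
  · rintro ⟨_ | j, v, hv, rfl⟩
    · simpa using hv
    · simp at hx
  · exact fun h => ⟨0, w, h, rfl⟩

theorem cons_mem_runThenZerosThree :
    a :: w ∈ runThenZerosThree n x ↔
      (a = x ∧ w ∈ runThenZerosThree n x) ∨ a :: w ∈ zerosThenThree n 0 := by
  constructor
  · rintro ⟨j, v, hv, h⟩
    rcases cons_eq_replicate_append.1 h with ⟨-, rfl⟩ | ⟨s, -, rfl, rfl⟩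
    exacts [Or.inr hv, Or.inl ⟨rfl, s, v, hv, rfl⟩]
  · rintro (⟨rfl, j, v, hv, rfl⟩ | h)
    exacts [⟨j + 1, v, hv, rfl⟩, ⟨0, _, h, rfl⟩]

theorem nil_mem_zerosThenRun : [] ∈ zerosThenRun n r ↔ r = 0 := by
  constructor
  · rintro ⟨t, b, v, rfl, -, h⟩
    obtain ⟨h, -⟩ := append_eq_nil_iff.1 h.symm
    simp_all
  · rintro rfl
    exact ⟨0, true, [], by simp, by simp, rfl⟩

theorem cons_mem_zerosThenRun : a :: w ∈ zerosThenRun n r ↔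
    (a = 0 ∧ w ∈ zerosThenRun n (r - 1)) ∨
      (r = 0 ∧ ∃ b, a = runLetter b ∧ ∀ c ∈ w, c = runLetter b) := by
  constructor
  · rintro ⟨t, b, v, rfl, hv, h⟩
    rcases cons_eq_replicate_append.1 h with ⟨rfl, rfl⟩ | ⟨s, rfl, rfl, rfl⟩
    · exact Or.inr ⟨Nat.cast_zero, b, forall_mem_cons.1 hv⟩
    · exact Or.inl ⟨rfl, s, b, v, by push_cast; ring, hv, rfl⟩
  · rintro (⟨rfl, t, b, v, ht, hv, rfl⟩ | ⟨rfl, b, rfl, hw⟩)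
    · exact ⟨t + 1, b, v, by push_cast; rw [ht]; ring, hv, rfl⟩
    · exact ⟨0, b, _, by simp, by simpa using hw, rfl⟩

/-- In both automata `count r` lies on the `0`-cycle: the number of `0`s still to be read before
the cycle may be left is `≡ r (mod n)`. -/
inductive State (n : ℕ)
  | start
  | run (b : Bool)
  | count (r : ZMod n)

def State.equivOption : State n ≃ Option (Bool ⊕ ZMod n) where
  toFun
    | .start => none
    | .run b => some (.inl b)
    | .count r => some (.inr r)
  invFun
    | none => .start
    | some (.inl b) => .run b
    | some (.inr r) => .count r
  left_inv q := by cases q <;> rfl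
  right_inv o := by rcases o with _ | b | r <;> rfl

instance [NeZero n] : Fintype (State n) := Fintype.ofEquiv _ State.equivOption.symm

theorem card_state [NeZero n] : Fintype.card (State n) = n + 3 := by
  simp [Fintype.card_congr State.equivOption, ZMod.card]
  omega

def forwardNFA (n : ℕ) : SNFA (Fin 4) (State n) where
  step
    | .start, a => {q | a = 3 ∧ q = .count 0}
    | .count r, a =>
        {q | (a = 0 ∧ q = .count (r - 1)) ∨ (r = 0 ∧ ∃ b, a = runLetter b ∧ q = .run b)}
    | .run b, a => {q | a = runLetter b ∧ q = .run b}
  start := .start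
  accept := {q | q = .count 0 ∨ ∃ b, q = .run b}

def forwardLang (n : ℕ) : State n → Language (Fin 4)
  | .start => {w | ∃ v ∈ zerosThenRun n 0, w = 3 :: v}
  | .count r => zerosThenRun n r
  | .run b => {w | ∀ c ∈ w, c = runLetter b}

theorem acceptsFrom_forwardNFA (q : State n) :
    (forwardNFA n).toNFA.acceptsFrom {q} = forwardLang n q := by
  refine NFA.acceptsFrom_singleton_eq _ _ ?_ ?_ q
  · rintro (_ | b | r) <;> simp [forwardNFA, forwardLang, SNFA.toNFA, nil_mem_zerosThenRun]
  · rintro (_ | b | r) a w <;>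
      simp [forwardNFA, forwardLang, SNFA.toNFA, cons_mem_zerosThenRun, and_or_left,
        or_and_right, exists_or, and_assoc]
    all_goals tauto

/-- `none` is the final state. -/
def reverseNFA (n : ℕ) : SNFA (Fin 4) (Option (State n)) where
  step
    | some .start, a => {q | (a = 1 ∧ q = some (.run true)) ∨ (a = 2 ∧ q = some (.run false)) ∨
        (a = 0 ∧ q = some (.count (-1))) ∨ (a = 3 ∧ q = none)}
    | some (.run b), a => {q | (a = runLetter b ∧ q = some (.run b)) ∨
        (a = 0 ∧ q = some (.count (-1))) ∨ (a = 3 ∧ q = none)}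
    | some (.count r), a => {q | (a = 0 ∧ q = some (.count (r - 1))) ∨ (a = 3 ∧ r = 0 ∧ q = none)}
    | none, _ => ∅
  start := some .start
  accept := {none}

def reverseLang (n : ℕ) : Option (State n) → Language (Fin 4)
  | some .start => runThenZerosThree n 1 + runThenZerosThree n 2
  | some (.run b) => runThenZerosThree n (runLetter b)
  | some (.count r) => zerosThenThree n r
  | none => 1

theorem acceptsFrom_reverseNFA (q : Option (State n)) :
    (reverseNFA n).toNFA.acceptsFrom {q} = reverseLang n q := by
  refine NFA.acceptsFrom_singleton_eq _ _ ?_ ?_ q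
  · rintro (_ | _ | b | r) <;>
      simp [reverseNFA, reverseLang, SNFA.toNFA, Language.mem_add, -add_eq_sup,
        notMem_zerosThenThree_of_three_notMem, mem_runThenZerosThree_of_notMem]
  · rintro (_ | _ | b | r) a w <;>
      simp [reverseNFA, reverseLang, SNFA.toNFA, Language.mem_add, -add_eq_sup, runLetter,
        cons_mem_zerosThenThree, cons_mem_runThenZerosThree, or_and_right, exists_or, and_assoc]
    all_goals tauto

theorem revWitness_eq_forwardLang (m : ℕ) : revWitness m = forwardLang (m - 3) .start := by
  ext w
  constructor
  · rintro ⟨k, j, rfl | rfl⟩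
    · exact ⟨_, ⟨k * (m - 3), true, _, by simp, by simp [runLetter], rfl⟩, rfl⟩
    · exact ⟨_, ⟨k * (m - 3), false, _, by simp, by simp [runLetter], rfl⟩, rfl⟩
  · rintro ⟨_, ⟨t, b, v, ht, hv, rfl⟩, rfl⟩
    obtain ⟨k, rfl⟩ := ZMod.natCast_eq_zero_iff_exists_mul.1 ht
    rw [eq_replicate_iff.2 ⟨rfl, hv⟩]
    cases b
    exacts [⟨k, _, Or.inr rfl⟩, ⟨k, _, Or.inl rfl⟩]

theorem revLang_revWitness (m : ℕ) :
    revLang (revWitness m) = runThenZerosThree (m - 3) 1 + runThenZerosThree (m - 3) 2 := by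
  ext w
  rw [Language.mem_add]
  simp [revLang, revWitness, runThenZerosThree, zerosThenThree, reverse_eq_cons_iff,
    ZMod.natCast_eq_zero_iff_exists_mul, exists_or]
  exact or_congr exists_comm exists_comm

def foolingPrefix (n : ℕ) : Option (Bool ⊕ ZMod n) → List (Fin 4)
  | none => [3]
  | some (.inl b) => [runLetter b]
  | some (.inr r) => 1 :: 0 :: replicate r.val 0

def foolingSuffix (n : ℕ) : Option (Bool ⊕ ZMod n) → List (Fin 4)
  | none => []
  | some (.inl b) => [runLetter b, 3]
  | some (.inr r) => replicate (-1 - r).val 0 ++ [3]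

theorem foolingPrefix_append_foolingSuffix_mem [NeZero n] (i j : Option (Bool ⊕ ZMod n)) :
    foolingPrefix n i ++ foolingSuffix n j ∈ runThenZerosThree n 1 + runThenZerosThree n 2 ↔
      j = i ∨ (∃ b, i = some (.inl b)) ∧ j = some (.inr (-1)) := by
  rw [Language.mem_add]
  rcases i with _ | (_ | _) | r <;> rcases j with _ | (_ | _) | s <;>
    simp [foolingPrefix, foolingSuffix, runLetter, cons_mem_runThenZerosThree,
      cons_mem_zerosThenThree, replicate_append_mem_zerosThenThree,
      mem_runThenZerosThree_of_notMem, notMem_zerosThenThree_of_three_notMem,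
      add_eq_zero_iff_eq_neg, sub_eq_zero]

theorem NSCge_runThenZerosThree [NeZero n] :
    NSCge (runThenZerosThree n 1 + runThenZerosThree n 2) (n + 4) := by
  have h := foolingPrefix_append_foolingSuffix_mem (n := n)
  have hcard : Fintype.card (Option (Bool ⊕ ZMod n)) + 1 = n + 4 := by
    simp [ZMod.card]
    omega
  rw [← hcard]
  refine NSCge_of_foolingSet (foolingPrefix n) (foolingSuffix n) (fun i => (h i i).2 (Or.inl rfl))
    (fun i j hij => ?_) (fun i => ?_)
  · by_contra! hboth
    rcases (h i j).1 hboth.1 with rfl | ⟨⟨b, rfl⟩, rfl⟩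
    · exact hij rfl
    · rcases (h _ _).1 hboth.2 with h' | ⟨⟨b', h'⟩, -⟩ <;> simp at h'
  · obtain ⟨b, hb⟩ : ∃ b : Bool, i ≠ some (.inl b) := by
      rcases i with _ | b | r
      exacts [⟨true, by simp⟩, ⟨!b, by simp⟩, ⟨true, by simp⟩]
    have hv : foolingSuffix n (some (.inl b)) ∈ runThenZerosThree n 1 + runThenZerosThree n 2 := by
      cases b <;> simp [foolingSuffix, runLetter, Language.mem_add, -add_eq_sup,
        cons_mem_runThenZerosThree, cons_mem_zerosThenThree]
    refine ⟨_, hv, fun hmem => ?_⟩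
    rcases (h i _).1 hmem with h' | ⟨-, h'⟩
    · exact hb h'.symm
    · simp at h'

theorem suffixFree_revWitness (m : ℕ) : SuffixFree (revWitness m) :=
  suffixFree_of_forall_eq_cons_notMem 3 fun w ⟨k, j, hw⟩ => by
    rcases hw with rfl | rfl <;> exact ⟨_, rfl, by simp⟩

end ReversalWitness

open ReversalWitness

/-- **Reversal, lower bound witness.** For `m ≥ 4`, the language
`L = d(a^{m-3})*(b* + c*)` over `{a, b, c, d}` is suffix-free, `NSC(L) ≤ m`,
and `NSC(L^R) = m + 1`. -/
theorem reversal_lower_witness (m : ℕ) (hm : 4 ≤ m) :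
    SuffixFree (revWitness m) ∧ NSCle (revWitness m) m ∧
    NSCeq (revLang (revWitness m)) (m + 1) := by
  obtain ⟨n, rfl⟩ : ∃ n, m = n + 3 := ⟨m - 3, by omega⟩
  have : NeZero n := ⟨by omega⟩
  have forward_accepts : (forwardNFA n).accepts = revWitness (n + 3) := by
    rw [SNFA.accepts_eq_acceptsFrom_start, acceptsFrom_forwardNFA, revWitness_eq_forwardLang,
      Nat.add_sub_cancel]
    rfl
  have reverse_accepts : (reverseNFA n).accepts = revLang (revWitness (n + 3)) := by
    rw [SNFA.accepts_eq_acceptsFrom_start, acceptsFrom_reverseNFA, revLang_revWitness,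
      Nat.add_sub_cancel]
    rfl
  refine ⟨suffixFree_revWitness _,
    ⟨State n, inferInstance, forwardNFA n, forward_accepts, card_state.le⟩,
    ⟨Option (State n), inferInstance, reverseNFA n, reverse_accepts, by simp [card_state]⟩, ?_⟩
  rw [revLang_revWitness, Nat.add_sub_cancel]
  exact NSCge_runThenZerosThree
end
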